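/- arXiv:1904.12243 — 3 statements merged into one kernel-verified Lean document; each statement's English description precedes it below -/
import Mathlib

section
/- Let c, D, k > 0 be such that c⁴/(4D²) ≠ c² l(l+1) k² for every natural number l. For l ∈ ℕ define A_l(t) = cosh(tK_l) + (c²/(2DK_l))·sinh(tK_l) if c⁴/(4D²) > c² l(l+1) k² (with K_l = sqrt(c⁴/(4D²) − c² l(l+1)k²)) and A_l(t) = 0 otherwise; define B_l(t) = cos(tK_l') + (c²/(2DK_l'))·sin(tK_l') if c² l(l+1) k² > c⁴/(4D²) (with K_l' = sqrt(c² l(l+1)k² − c⁴/(4D²))) and B_l(t) = 0 otherwise. Let (C_l)_{l≥0} be nonnegative reals with ∑_{l=0}^∞ (2l+1)C_l < ∞. Then there exists a constant C > 0, depending only on c, D and k, such that for all t ≥ 0 and all L ∈ ℕ: exp(−c²t/D) · ∑_{l=L}^∞ (2l+1) C_l · (A_l(t)² + B_l(t)²) ≤ C · ∑_{l=L}^∞ (2l+1) C_l. -/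
open Real

/-- The subcritical frequency parameter `K_l`. -/
noncomputable def Kl (c D k : ℝ) (l : ℕ) : ℝ :=
  Real.sqrt (c^4/(4*D^2) - c^2*(l:ℝ)*((l:ℝ)+1)*k^2)

/-- The supercritical frequency parameter `K_l'`. -/
noncomputable def Kl' (c D k : ℝ) (l : ℕ) : ℝ :=
  Real.sqrt (c^2*(l:ℝ)*((l:ℝ)+1)*k^2 - c^4/(4*D^2))

/-- The subcritical (hyperbolic) amplitude factor `A_l(t)`, vanishing on the
supercritical branch. -/
noncomputable def Afun (c D k : ℝ) (l : ℕ) (t : ℝ) : ℝ :=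
  if c^2*(l:ℝ)*((l:ℝ)+1)*k^2 < c^4/(4*D^2) then
    Real.cosh (t * Kl c D k l) + (c^2/(2*D*Kl c D k l)) * Real.sinh (t * Kl c D k l)
  else 0

/-- The supercritical (oscillatory) amplitude factor `B_l(t)`, vanishing on the
subcritical branch. -/
noncomputable def Bfun (c D k : ℝ) (l : ℕ) (t : ℝ) : ℝ :=
  if c^4/(4*D^2) < c^2*(l:ℝ)*((l:ℝ)+1)*k^2 then
    Real.cos (t * Kl' c D k l) + (c^2/(2*D*Kl' c D k l)) * Real.sin (t * Kl' c D k l)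
  else 0

/-- The active frequency parameter. -/
noncomputable def kapp (c D k : ℝ) (l : ℕ) : ℝ :=
  if c^2*(l:ℝ)*((l:ℝ)+1)*k^2 < c^4/(4*D^2) then Kl c D k l else Kl' c D k l

lemma kapp_pos (c D k : ℝ) (hnd : ∀ l : ℕ, c^4/(4*D^2) ≠ c^2*(l:ℝ)*((l:ℝ)+1)*k^2)
    (l : ℕ) : 0 < kapp c D k l := by
  unfold kapp Kl Kl'
  split_ifs with h
  · exact Real.sqrt_pos.2 (by linarith)
  · have h2 : c^4/(4*D^2) < c^2*(l:ℝ)*((l:ℝ)+1)*k^2 :=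
      lt_of_le_of_ne (not_lt.1 h) (hnd l)
    exact Real.sqrt_pos.2 (by linarith)

/-- Uniform lower bound on the active frequency. -/
lemma kapp_lower (c D k : ℝ) (hc : 0 < c) (hD : 0 < D) (hk : 0 < k)
    (hnd : ∀ l : ℕ, c^4/(4*D^2) ≠ c^2*(l:ℝ)*((l:ℝ)+1)*k^2) :
    ∃ μ : ℝ, 0 < μ ∧ ∀ l : ℕ, μ ≤ kapp c D k l := by
  set N := ⌈(c^4/(4*D^2) + 1)/(c^2*k^2)⌉₊ with hN
  have hne : (Finset.range (N+1)).Nonempty := ⟨0, by simp⟩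
  set m := (Finset.range (N+1)).inf' hne (kapp c D k) with hm
  have hmpos : 0 < m := by
    rw [hm, Finset.lt_inf'_iff]
    exact fun b _ => kapp_pos c D k hnd b
  refine ⟨min m 1, lt_min hmpos one_pos, fun l => ?_⟩
  by_cases hl : l ≤ N
  · exact le_trans (min_le_left _ _)
      (Finset.inf'_le _ (Finset.mem_range.2 (Nat.lt_succ_of_le hl)))
  · push_neg at hl
    have hcast : (N:ℝ) ≤ (l:ℝ) := Nat.cast_le.2 hl.le
    have hx : (c^4/(4*D^2) + 1)/(c^2*k^2) ≤ (N:ℝ) := Nat.le_ceil _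
    have hck : 0 < c^2*k^2 := by positivity
    have harg : c^4/(4*D^2) + 1 ≤ c^2*(l:ℝ)*((l:ℝ)+1)*k^2 := by
      have h1 : c^4/(4*D^2) + 1 ≤ c^2*k^2 * (l:ℝ) := by
        have := (div_le_iff₀ hck).1 (hx.trans hcast)
        linarith
      have h2 : c^2*k^2*(l:ℝ) ≤ c^2*(l:ℝ)*((l:ℝ)+1)*k^2 := by
        nlinarith [mul_nonneg hck.le (sq_nonneg (l:ℝ))]
      linarith
    have hsup : ¬ (c^2*(l:ℝ)*((l:ℝ)+1)*k^2 < c^4/(4*D^2)) := by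
      push_neg
      have : (0:ℝ) ≤ c^4/(4*D^2) := by positivity
      linarith
    rw [kapp, if_neg hsup, Kl']
    calc min m 1 ≤ 1 := min_le_right _ _
      _ = Real.sqrt 1 := Real.sqrt_one.symm
      _ ≤ Real.sqrt (c^2*(l:ℝ)*((l:ℝ)+1)*k^2 - c^4/(4*D^2)) :=
          Real.sqrt_le_sqrt (by linarith)

set_option maxHeartbeats 1000000 in
/-- Uniform pointwise bound. -/
lemma pointwise_bound (c D k : ℝ) (hc : 0 < c) (hD : 0 < D) (hk : 0 < k)
    (hnd : ∀ l : ℕ, c^4/(4*D^2) ≠ c^2*(l:ℝ)*((l:ℝ)+1)*k^2) :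
    ∃ C₀ : ℝ, 0 < C₀ ∧ ∀ (l : ℕ) (t : ℝ), 0 ≤ t →
      Real.exp (-c^2*t/D) * ((Afun c D k l t)^2 + (Bfun c D k l t)^2) ≤ C₀ := by
  obtain ⟨μ, hμ, hμle⟩ := kapp_lower c D k hc hD hk hnd
  set R := c^2/(2*D*μ) with hR
  clear_value R
  have hR0 : 0 ≤ R := by rw [hR]; positivity
  refine ⟨(1+R)^2, by nlinarith [hR0, sq_nonneg R], fun l t ht => ?_⟩
  have hκpos : 0 < kapp c D k l := kapp_pos c D k hnd l
  have hexp0 : Real.exp (-c^2*t/D) ≤ 1 := by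
    rw [Real.exp_le_one_iff, neg_mul, neg_div, neg_nonpos]
    positivity
  by_cases h : c^2*(l:ℝ)*((l:ℝ)+1)*k^2 < c^4/(4*D^2)
  · -- subcritical: B = 0
    have hB : Bfun c D k l t = 0 := by
      rw [Bfun, if_neg (by linarith)]
    have hκ : kapp c D k l = Kl c D k l := by rw [kapp, if_pos h]
    set K := Kl c D k l with hK
    clear_value K
    have hKpos : 0 < K := hκ ▸ hκpos
    have hKμ : μ ≤ K := hκ ▸ hμle l
    have hKle : K ≤ c^2/(2*D) := by
      have hid : c^4/(4*D^2) = (c^2/(2*D))^2 := by ring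
      have hs0 : (0:ℝ) ≤ c^2*(l:ℝ)*((l:ℝ)+1)*k^2 := by positivity
      rw [hK, Kl]
      calc Real.sqrt (c^4/(4*D^2) - c^2*(l:ℝ)*((l:ℝ)+1)*k^2)
          ≤ Real.sqrt ((c^2/(2*D))^2) := Real.sqrt_le_sqrt (by rw [← hid]; linarith)
        _ = c^2/(2*D) := Real.sqrt_sq (by positivity)
    set r := c^2/(2*D*K) with hr
    have hr0 : 0 ≤ r := by rw [hr]; positivity
    have hrR : r ≤ R := by
      rw [hr, hR, div_le_div_iff₀ (by positivity) (by positivity)]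
      nlinarith [mul_le_mul_of_nonneg_left hKμ (by positivity : (0:ℝ) ≤ 2*D*c^2), sq_nonneg c]
    clear_value r
    set x := t * K with hx
    clear_value x
    have hx0 : 0 ≤ x := by rw [hx]; exact mul_nonneg ht hKpos.le
    have hcosh : Real.cosh x ≤ Real.exp x := by
      rw [Real.cosh_eq]
      have := Real.exp_le_exp.2 (show -x ≤ x by linarith)
      linarith
    have hsinh0 : 0 ≤ Real.sinh x := by
      rw [Real.sinh_eq]
      have := Real.exp_le_exp.2 (show -x ≤ x by linarith)
      linarith
    have hsinh : Real.sinh x ≤ Real.exp x := by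
      rw [Real.sinh_eq]
      have h1 := (Real.exp_pos (-x)).le
      have h2 := (Real.exp_pos x).le
      linarith
    have hA : Afun c D k l t = Real.cosh x + r * Real.sinh x := by
      rw [Afun, if_pos h, hx, hr, hK]
    have hA0 : 0 ≤ Afun c D k l t := by
      rw [hA]
      have h1 := Real.cosh_pos (x := x)
      have h2 := mul_nonneg hr0 hsinh0
      linarith
    have hAle : Afun c D k l t ≤ (1+r) * Real.exp x := by
      rw [hA]
      nlinarith [mul_le_mul_of_nonneg_left hsinh hr0]
    have hsq : (Afun c D k l t)^2 ≤ ((1+r) * Real.exp x)^2 :=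
      pow_le_pow_left₀ hA0 hAle 2
    have h2x : 2 * x ≤ c^2*t/D := by
      have h1 := mul_le_mul_of_nonneg_left hKle ht
      have h2 : t * (c^2/(2*D)) * 2 = c^2*t/D := by ring
      rw [hx]
      linarith
    have hexpx : Real.exp (-c^2*t/D) * Real.exp x ^ 2 ≤ 1 := by
      rw [← Real.exp_nat_mul, ← Real.exp_add, Real.exp_le_one_iff, neg_mul, neg_div]
      push_cast
      linarith
    have hfin : Real.exp (-c^2*t/D) * ((1+r) * Real.exp x)^2 ≤ (1+r)^2 := by
      have heq : Real.exp (-c^2*t/D) * ((1+r) * Real.exp x)^2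
          = (1+r)^2 * (Real.exp (-c^2*t/D) * Real.exp x ^ 2) := by ring
      rw [heq]
      nlinarith [sq_nonneg (1+r)]
    have h1R : (1+r)^2 ≤ (1+R)^2 := by nlinarith
    have hmul := mul_le_mul_of_nonneg_left hsq (Real.exp_pos (-c^2*t/D)).le
    rw [hB]
    nlinarith
  · -- supercritical: A = 0
    have hA : Afun c D k l t = 0 := by rw [Afun, if_neg h]
    have hlt : c^4/(4*D^2) < c^2*(l:ℝ)*((l:ℝ)+1)*k^2 :=
      lt_of_le_of_ne (not_lt.1 h) (hnd l)
    have hκ : kapp c D k l = Kl' c D k l := by rw [kapp, if_neg h]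
    set K := Kl' c D k l with hK
    clear_value K
    have hKpos : 0 < K := hκ ▸ hκpos
    have hKμ : μ ≤ K := hκ ▸ hμle l
    set r := c^2/(2*D*K) with hr
    have hr0 : 0 ≤ r := by rw [hr]; positivity
    have hrR : r ≤ R := by
      rw [hr, hR, div_le_div_iff₀ (by positivity) (by positivity)]
      nlinarith [mul_le_mul_of_nonneg_left hKμ (by positivity : (0:ℝ) ≤ 2*D*c^2), sq_nonneg c]
    clear_value r
    have hB : Bfun c D k l t = Real.cos (t*K) + r * Real.sin (t*K) := by
      rw [Bfun, if_pos hlt, hr, hK]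
    have hBle : |Bfun c D k l t| ≤ 1 + r := by
      rw [hB]
      calc |Real.cos (t*K) + r * Real.sin (t*K)|
          ≤ |Real.cos (t*K)| + |r * Real.sin (t*K)| := abs_add_le _ _
        _ ≤ 1 + r := by
            have h1 := Real.abs_cos_le_one (t*K)
            have h2 := Real.abs_sin_le_one (t*K)
            rw [abs_mul, abs_of_nonneg hr0]
            nlinarith
    have hBsq : (Bfun c D k l t)^2 ≤ (1+r)^2 := by
      rw [← sq_abs]
      exact pow_le_pow_left₀ (abs_nonneg _) hBle 2
    have h1R : (1+r)^2 ≤ (1+R)^2 := by nlinarith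
    rw [hA]
    nlinarith [(Real.exp_pos (-c^2*t/D)).le, sq_nonneg (Bfun c D k l t)]

/-- Generic tail comparison for weighted tsums. -/
lemma tsum_aux (E C₀ : ℝ) (hE : 0 < E) (a b : ℕ → ℝ)
    (ha0 : ∀ l, 0 ≤ a l) (hbs : Summable b)
    (hle : ∀ l, E * a l ≤ C₀ * b l) :
    E * ∑' l, a l ≤ C₀ * ∑' l, b l := by
  have has : Summable a := by
    refine Summable.of_nonneg_of_le (f := fun l => E⁻¹ * (C₀ * b l)) ha0 (fun l => ?_)
      ((hbs.mul_left C₀).mul_left E⁻¹)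
    have h2 := mul_le_mul_of_nonneg_left (hle l) (inv_nonneg.2 hE.le)
    rwa [← mul_assoc, inv_mul_cancel₀ hE.ne', one_mul] at h2
  calc E * ∑' l, a l = ∑' l, E * a l := tsum_mul_left.symm
    _ ≤ ∑' l, C₀ * b l := Summable.tsum_le_tsum hle (has.mul_left _) (hbs.mul_left _)
    _ = C₀ * ∑' l, b l := tsum_mul_left

/-- uniform-in-time bound for the weighted tail sums of
`(2l+1) C_l (A_l(t)² + B_l(t)²)`, the series form of the first bound of Theorem 3. -/
theorem stmt_6 (c D k : ℝ) (hc : 0 < c) (hD : 0 < D) (hk : 0 < k)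
    (hnd : ∀ l : ℕ, c^4/(4*D^2) ≠ c^2*(l:ℝ)*((l:ℝ)+1)*k^2)
    (C : ℕ → ℝ) (hC : ∀ l, 0 ≤ C l)
    (hsum : Summable (fun l : ℕ => (2*(l:ℝ)+1) * C l)) :
    ∃ C₀ : ℝ, 0 < C₀ ∧ ∀ t : ℝ, 0 ≤ t → ∀ L : ℕ,
      Real.exp (-c^2*t/D) *
        ∑' l : ℕ, (2*((l+L : ℕ):ℝ)+1) * C (l+L) *
          ((Afun c D k (l+L) t)^2 + (Bfun c D k (l+L) t)^2)
      ≤ C₀ * ∑' l : ℕ, (2*((l+L : ℕ):ℝ)+1) * C (l+L) := by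
  obtain ⟨C₀, hC₀, key⟩ := pointwise_bound c D k hc hD hk hnd
  refine ⟨C₀, hC₀, fun t ht L => ?_⟩
  have hb0 : ∀ l : ℕ, 0 ≤ (2*((l+L : ℕ):ℝ)+1) * C (l+L) := fun l =>
    mul_nonneg (by positivity) (hC _)
  refine tsum_aux _ _ (Real.exp_pos _) _ _
    (fun l => mul_nonneg (hb0 l) (by positivity)) ?_ (fun l => ?_)
  · exact (summable_nat_add_iff L).2 hsum
  · have h1 := key (l+L) t ht
    nlinarith [mul_le_mul_of_nonneg_left h1 (hb0 l)]
end

section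
/- Let c, D, k > 0 be such that c⁴/(4D²) ≠ c² l(l+1) k² for every natural number l. For l ∈ ℕ define A_l(t) = cosh(tK_l) + (c²/(2DK_l))·sinh(tK_l) if c⁴/(4D²) > c² l(l+1) k² (with K_l = sqrt(c⁴/(4D²) − c² l(l+1)k²)) and A_l(t) = 0 otherwise; define B_l(t) = cos(tK_l') + (c²/(2DK_l'))·sin(tK_l') if c² l(l+1) k² > c⁴/(4D²) (with K_l' = sqrt(c² l(l+1)k² − c⁴/(4D²))) and B_l(t) = 0 otherwise. Let (C_l)_{l≥0} be nonnegative reals with ∑_{l=0}^∞ (2l+1)C_l < ∞. Then there exists a constant C > 0, depending only on c, D and k, such that for every natural number L > (sqrt(D²k² + c²) − Dk)/(2Dk) and all t ≥ 0: exp(−c²t/D) · ∑_{l=L}^∞ (2l+1) C_l · (A_l(t)² + B_l(t)²) ≤ C · exp(−c²t/D) · ∑_{l=L}^∞ (2l+1) C_l. -/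
open Real

/-- the exponentially decaying truncation-error bound of Theorem 3,
valid beyond the threshold degree `L > (sqrt(D²k² + c²) − Dk)/(2Dk)`. -/
theorem stmt_7 (c D k : ℝ) (hc : 0 < c) (hD : 0 < D) (hk : 0 < k)
    (hnd : ∀ l : ℕ, c^4/(4*D^2) ≠ c^2*(l:ℝ)*((l:ℝ)+1)*k^2)
    (C : ℕ → ℝ) (hC : ∀ l, 0 ≤ C l)
    (hsum : Summable (fun l : ℕ => (2*(l:ℝ)+1) * C l)) :
    ∃ C₀ : ℝ, 0 < C₀ ∧ ∀ L : ℕ,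
      (L:ℝ) > (Real.sqrt (D^2*k^2 + c^2) - D*k)/(2*D*k) → ∀ t : ℝ, 0 ≤ t →
      Real.exp (-c^2*t/D) *
        ∑' l : ℕ, (2*((l+L : ℕ):ℝ)+1) * C (l+L) *
          ((Afun c D k (l+L) t)^2 + (Bfun c D k (l+L) t)^2)
      ≤ C₀ * Real.exp (-c^2*t/D) * ∑' l : ℕ, (2*((l+L : ℕ):ℝ)+1) * C (l+L) := by

  set θ := (Real.sqrt (D^2*k^2 + c^2) - D*k)/(2*D*k) with hθdef
  have hDk : (0:ℝ) < 2*D*k := by positivity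
  have hsq : Real.sqrt (D^2*k^2 + c^2) ^ 2 = D^2*k^2 + c^2 :=
    Real.sq_sqrt (by positivity)
  have hθpos : 0 < θ := by
    have h1 : D*k < Real.sqrt (D^2*k^2 + c^2) := by
      rw [show D^2*k^2 + c^2 = (D*k)^2 + c^2 by ring]
      have := Real.lt_sqrt (y := (D*k)^2 + c^2) (by positivity : (0:ℝ) ≤ D*k)
      exact this.mpr (by nlinarith)
    exact div_pos (by linarith) hDk
  have key : ∀ n : ℕ, θ < (n:ℝ) → c^4/(4*D^2) < c^2*(n:ℝ)*((n:ℝ)+1)*k^2 := by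
    intro n hn
    have h2 : Real.sqrt (D^2*k^2 + c^2) < 2*D*k*(n:ℝ) + D*k := by
      have := (div_lt_iff₀ hDk).mp hn
      linarith
    have hs0 : (0:ℝ) ≤ Real.sqrt (D^2*k^2 + c^2) := Real.sqrt_nonneg _
    have h3 : D^2*k^2 + c^2 < (2*D*k*(n:ℝ) + D*k)^2 := by
      nlinarith [mul_self_lt_mul_self hs0 h2, hsq]
    rw [div_lt_iff₀ (by positivity : (0:ℝ) < 4*D^2)]
    nlinarith [h3, mul_pos hc hc]
  set l₀ : ℕ := Nat.floor θ + 1 with hl₀def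
  have hl₀ : θ < (l₀:ℝ) := by
    push_cast [hl₀def]
    exact Nat.lt_floor_add_one θ
  have hK₀ : 0 < Kl' c D k l₀ := by
    rw [Kl', Real.sqrt_pos]
    linarith [key l₀ hl₀]
  set M : ℝ := 1 + c^2/(2*D*Kl' c D k l₀) with hMdef
  have hM1 : 1 ≤ M :=
    le_add_of_nonneg_right (by positivity)
  have hMpos : 0 < M := by linarith
  -- pointwise amplitude bound beyond the threshold
  have hbound : ∀ n : ℕ, θ < (n:ℝ) → ∀ t : ℝ,
      (Afun c D k n t)^2 + (Bfun c D k n t)^2 ≤ M^2 := by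
    intro n hn t
    have hsup := key n hn
    have hA : Afun c D k n t = 0 := by
      rw [Afun, if_neg]; linarith
    have hnl₀ : l₀ ≤ n := by
      have h1 : (Nat.floor θ : ℝ) ≤ θ := Nat.floor_le hθpos.le
      have h2 : (Nat.floor θ : ℝ) < (n:ℝ) := lt_of_le_of_lt h1 hn
      have h3 : Nat.floor θ < n := by exact_mod_cast h2
      omega
    have hnl₀' : (l₀:ℝ) ≤ (n:ℝ) := by exact_mod_cast hnl₀
    have hl₀0 : (0:ℝ) ≤ (l₀:ℝ) := Nat.cast_nonneg _
    have hK' : Kl' c D k l₀ ≤ Kl' c D k n := by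
      apply Real.sqrt_le_sqrt
      have h5 : (l₀:ℝ)*((l₀:ℝ)+1) ≤ (n:ℝ)*((n:ℝ)+1) := by nlinarith
      have h6 : c^2*k^2*((l₀:ℝ)*((l₀:ℝ)+1)) ≤ c^2*k^2*((n:ℝ)*((n:ℝ)+1)) :=
        mul_le_mul_of_nonneg_left h5 (by positivity)
      linarith [h6]
    have hK'pos : 0 < Kl' c D k n := lt_of_lt_of_le hK₀ hK'
    have hr : c^2/(2*D*Kl' c D k n) ≤ c^2/(2*D*Kl' c D k l₀) := by
      gcongr
    have hrn : 0 ≤ c^2/(2*D*Kl' c D k n) := by positivity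
    have hB : |Bfun c D k n t| ≤ M := by
      rw [Bfun, if_pos hsup]
      calc |Real.cos (t * Kl' c D k n) +
              c^2/(2*D*Kl' c D k n) * Real.sin (t * Kl' c D k n)|
          ≤ |Real.cos (t * Kl' c D k n)| +
              |c^2/(2*D*Kl' c D k n) * Real.sin (t * Kl' c D k n)| := abs_add_le _ _
        _ ≤ 1 + c^2/(2*D*Kl' c D k n) * 1 := by
            have h1 := Real.abs_cos_le_one (t * Kl' c D k n)
            have h2 : |c^2/(2*D*Kl' c D k n) * Real.sin (t * Kl' c D k n)|
                ≤ c^2/(2*D*Kl' c D k n) * 1 := by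
              rw [abs_mul, abs_of_nonneg hrn]
              exact mul_le_mul_of_nonneg_left (Real.abs_sin_le_one _) hrn
            linarith
        _ ≤ M := by rw [hMdef]; linarith
    have hB2 : (Bfun c D k n t)^2 ≤ M^2 := by
      rw [← sq_abs]
      exact pow_le_pow_left₀ (abs_nonneg _) hB 2
    rw [hA]
    simpa using hB2
  refine ⟨M^2, by positivity, ?_⟩
  intro L hL t ht
  have hfsum : Summable (fun l : ℕ => (2*((l+L:ℕ):ℝ)+1) * C (l+L)) := by
    exact_mod_cast (summable_nat_add_iff L).mpr hsum
  have hterm_nonneg : ∀ l : ℕ, 0 ≤ (2*((l+L:ℕ):ℝ)+1) * C (l+L) := by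
    intro l
    have : (0:ℝ) ≤ 2*((l+L:ℕ):ℝ)+1 := by positivity
    exact mul_nonneg this (hC _)
  have hle : ∀ l : ℕ,
      (2*((l+L:ℕ):ℝ)+1) * C (l+L) *
        ((Afun c D k (l+L) t)^2 + (Bfun c D k (l+L) t)^2)
      ≤ M^2 * ((2*((l+L:ℕ):ℝ)+1) * C (l+L)) := by
    intro l
    have hn : θ < ((l+L:ℕ):ℝ) := by
      have : (L:ℝ) ≤ ((l+L:ℕ):ℝ) := by
        push_cast; linarith [Nat.cast_nonneg (α := ℝ) l]
      linarith [hL]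
    have := hbound (l+L) hn t
    calc (2*((l+L:ℕ):ℝ)+1) * C (l+L) *
          ((Afun c D k (l+L) t)^2 + (Bfun c D k (l+L) t)^2)
        ≤ (2*((l+L:ℕ):ℝ)+1) * C (l+L) * M^2 :=
          mul_le_mul_of_nonneg_left this (hterm_nonneg l)
      _ = M^2 * ((2*((l+L:ℕ):ℝ)+1) * C (l+L)) := by ring
  have hlhs_nonneg : ∀ l : ℕ, 0 ≤ (2*((l+L:ℕ):ℝ)+1) * C (l+L) *
      ((Afun c D k (l+L) t)^2 + (Bfun c D k (l+L) t)^2) := by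
    intro l
    exact mul_nonneg (hterm_nonneg l) (by positivity)
  have hlhs_sum : Summable (fun l : ℕ => (2*((l+L:ℕ):ℝ)+1) * C (l+L) *
      ((Afun c D k (l+L) t)^2 + (Bfun c D k (l+L) t)^2)) :=
    Summable.of_nonneg_of_le hlhs_nonneg hle (hfsum.mul_left (M^2))
  have htsum : ∑' l : ℕ, (2*((l+L:ℕ):ℝ)+1) * C (l+L) *
      ((Afun c D k (l+L) t)^2 + (Bfun c D k (l+L) t)^2)
      ≤ M^2 * ∑' l : ℕ, (2*((l+L:ℕ):ℝ)+1) * C (l+L) := by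
    rw [← tsum_mul_left]
    exact Summable.tsum_le_tsum hle hlhs_sum (hfsum.mul_left (M^2))
  have hexp : (0:ℝ) ≤ Real.exp (-c^2*t/D) := (Real.exp_pos _).le
  calc Real.exp (-c^2*t/D) * ∑' l : ℕ, (2*((l+L:ℕ):ℝ)+1) * C (l+L) *
        ((Afun c D k (l+L) t)^2 + (Bfun c D k (l+L) t)^2)
      ≤ Real.exp (-c^2*t/D) * (M^2 * ∑' l : ℕ, (2*((l+L:ℕ):ℝ)+1) * C (l+L)) :=
        mul_le_mul_of_nonneg_left htsum hexp
    _ = M^2 * Real.exp (-c^2*t/D) * ∑' l : ℕ, (2*((l+L:ℕ):ℝ)+1) * C (l+L) := by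
        ring
end

section
/- Let c, D, k > 0 be such that c⁴/(4D²) ≠ c² l(l+1) k² for every natural number l. For l ∈ ℕ define A_l(t) = cosh(tK_l) + (c²/(2DK_l))·sinh(tK_l) if c⁴/(4D²) > c² l(l+1) k² (with K_l = sqrt(c⁴/(4D²) − c² l(l+1)k²)) and A_l(t) = 0 otherwise; define B_l(t) = cos(tK_l') + (c²/(2DK_l'))·sin(tK_l') if c² l(l+1) k² > c⁴/(4D²) (with K_l' = sqrt(c² l(l+1)k² − c⁴/(4D²))) and B_l(t) = 0 otherwise. Let (C_l)_{l≥0} be nonnegative reals with ∑_{l=0}^∞ (2l+1) C_l < ∞, and let (x_l)_{l≥0} be any real sequence with |x_l| ≤ 1 for all l. Then for all t, t' ≥ 0 the series ∑_{l=0}^∞ (2l+1) C_l · x_l · (A_l(t)·A_l(t') + B_l(t)·B_l(t')) converges absolutely. -/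
open Real

/-!
Only finitely many modes `l` are subcritical, since `c² l(l+1) k² → ∞`. Beyond them `A_l = 0`,
and once `K_l'² ≥ c⁴/(4D²)` the coefficient `c²/(2DK_l')` has modulus at most `1`, so `|B_l| ≤ 2`.
Hence the `l`-th term is eventually at most `4 |(2l+1) C_l|`, a summable majorant.
-/

open Filter

theorem abs_cos_add_mul_sin_le_two {r : ℝ} (hr : |r| ≤ 1) (θ : ℝ) :
    |cos θ + r * sin θ| ≤ 2 :=
  calc |cos θ + r * sin θ| ≤ |cos θ| + |r| * |sin θ| := by
        rw [← abs_mul]; exact abs_add_le _ _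
    _ ≤ 1 + 1 * 1 := by
        gcongr
        exacts [abs_cos_le_one θ, abs_sin_le_one θ]
    _ = 2 := by norm_num

section Modes

variable {c k : ℝ}

theorem eventually_lt_mul_mul_succ_mul (hc : c ≠ 0) (hk : k ≠ 0) (M : ℝ) :
    ∀ᶠ l : ℕ in atTop, M < c^2*(l:ℝ)*((l:ℝ)+1)*k^2 := by
  have hl : Tendsto (fun l : ℕ => (l:ℝ) * ((l:ℝ)+1)) atTop atTop :=
    tendsto_natCast_atTop_atTop.atTop_mul_atTop₀
      (tendsto_atTop_add_const_right _ 1 tendsto_natCast_atTop_atTop)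
  have h := ((hl.const_mul_atTop (pow_pos (abs_pos.2 hc) 2)).atTop_mul_const
    (pow_pos (abs_pos.2 hk) 2)).eventually_gt_atTop M
  filter_upwards [h] with l hl
  simpa only [sq_abs, mul_assoc] using hl

theorem eventually_forall_Afun_eq_zero (D : ℝ) (hc : c ≠ 0) (hk : k ≠ 0) :
    ∀ᶠ l : ℕ in atTop, ∀ t, Afun c D k l t = 0 := by
  filter_upwards [eventually_lt_mul_mul_succ_mul hc hk (c^4/(4*D^2))] with l hl t
  exact if_neg hl.le.not_gt

theorem eventually_forall_abs_Bfun_le_two (D : ℝ) (hc : c ≠ 0) (hk : k ≠ 0) :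
    ∀ᶠ l : ℕ in atTop, ∀ t, |Bfun c D k l t| ≤ 2 := by
  filter_upwards [eventually_lt_mul_mul_succ_mul hc hk (c^4/(4*D^2) + (c^2/(2*D))^2)]
    with l hl t
  have hsuper : c^4/(4*D^2) < c^2*(l:ℝ)*((l:ℝ)+1)*k^2 := by nlinarith
  have hK : |c^2/(2*D)| ≤ Kl' c D k l := abs_le_sqrt (by linarith)
  have hcoef : |c^2/(2*D*Kl' c D k l)| ≤ 1 := by
    rw [← div_div, abs_div, abs_of_nonneg ((abs_nonneg _).trans hK)]
    exact div_le_one_of_le₀ hK (sqrt_nonneg _)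
  rw [Bfun, if_pos hsuper]
  exact abs_cos_add_mul_sin_le_two hcoef _

end Modes

theorem stmt_17_general (c D k : ℝ) (hc : 0 < c) (hk : 0 < k)
    (C : ℕ → ℝ)
    (hsum : Summable (fun l : ℕ => (2*(l:ℝ)+1) * C l))
    (x : ℕ → ℝ) (hx : ∀ l, |x l| ≤ 1) :
    ∀ t t' : ℝ, 0 ≤ t → 0 ≤ t' →
      Summable (fun l : ℕ =>
        |(2*(l:ℝ)+1) * C l * x l *
          (Afun c D k l t * Afun c D k l t' + Bfun c D k l t * Bfun c D k l t')|) := by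
  intro t t' _ _
  refine Summable.of_norm_bounded_eventually_nat (hsum.abs.mul_left 4) ?_
  filter_upwards [eventually_forall_Afun_eq_zero D hc.ne' hk.ne',
    eventually_forall_abs_Bfun_le_two D hc.ne' hk.ne'] with l hA hB
  have hS : |Afun c D k l t * Afun c D k l t' + Bfun c D k l t * Bfun c D k l t'| ≤ 2 * 2 := by
    rw [hA, hA, zero_mul, zero_add, abs_mul]
    exact mul_le_mul (hB t) (hB t') (abs_nonneg _) zero_le_two
  rw [norm_abs_eq_norm, norm_mul, norm_mul, Real.norm_eq_abs, Real.norm_eq_abs,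
    Real.norm_eq_abs]
  calc |(2*(l:ℝ)+1) * C l| * |x l| * |Afun c D k l t * Afun c D k l t' +
        Bfun c D k l t * Bfun c D k l t'|
      ≤ |(2*(l:ℝ)+1) * C l| * 1 * (2 * 2) := by gcongr; exact hx l
    _ = 4 * |(2*(l:ℝ)+1) * C l| := by ring

/-- absolute convergence of the covariance series of the solution of the
spherical hyperbolic diffusion equation (Theorem 2). -/
theorem stmt_17 (c D k : ℝ) (hc : 0 < c) (hD : 0 < D) (hk : 0 < k)
    (hnd : ∀ l : ℕ, c^4/(4*D^2) ≠ c^2*(l:ℝ)*((l:ℝ)+1)*k^2)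
    (C : ℕ → ℝ) (hC : ∀ l, 0 ≤ C l)
    (hsum : Summable (fun l : ℕ => (2*(l:ℝ)+1) * C l))
    (x : ℕ → ℝ) (hx : ∀ l, |x l| ≤ 1) :
    ∀ t t' : ℝ, 0 ≤ t → 0 ≤ t' →
      Summable (fun l : ℕ =>
        |(2*(l:ℝ)+1) * C l * x l *
          (Afun c D k l t * Afun c D k l t' + Bfun c D k l t * Bfun c D k l t')|) :=
  stmt_17_general c D k hc hk C hsum x hx
end
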